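/- For the one-step system x(1) = r(0) + u(0) where u(0) = Q(κ(x(0))) is constrained to take values in a finite set S of cardinality 2^R, the worst-case error satisfies sup over |r(0)| ≤ 1 of |x(1)| ≥ 1/2^R: there exists r(0) ∈ [-1,1] such that for every s ∈ S, |r(0) + s| ≥ 1/2^R. -/
import Mathlib


theorem stmt_4 (R : ℕ) (hR : 1 ≤ R) (S : Finset ℝ) (hS : S.card = 2 ^ R) :
    ∃ r ∈ Set.Icc (-1 : ℝ) 1, ∀ s ∈ S, 1 / 2 ^ R ≤ |r + s| := by
  classical
  have hpos : (0:ℝ) < 2 ^ R := by positivity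
  set r : ℕ → ℝ := fun k => -1 + 2 * k / 2 ^ R with hr
  set Bad : Finset ℕ :=
    (Finset.range (2 ^ R + 1)).filter (fun k => ∃ s ∈ S, |r k + s| < 1 / 2 ^ R) with hBad
  set f : ℕ → ℝ := fun k =>
    if h : ∃ s ∈ S, |r k + s| < 1 / 2 ^ R then h.choose else 0 with hf
  have hfspec : ∀ k ∈ Bad, f k ∈ S ∧ |r k + f k| < 1 / 2 ^ R := by
    intro k hk
    have h : ∃ s ∈ S, |r k + s| < 1 / 2 ^ R := (Finset.mem_filter.mp hk).2
    have := h.choose_spec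
    simp only [hf, dif_pos h]
    exact ⟨this.1, this.2⟩
  have hcard : Bad.card ≤ S.card := by
    apply Finset.card_le_card_of_injOn f
    · intro k hk; exact (hfspec k hk).1
    · intro k₁ hk₁ k₂ hk₂ heq
      by_contra hne
      have h1 := (hfspec k₁ hk₁).2
      have h2 := (hfspec k₂ hk₂).2
      rw [heq] at h1
      have hdist : |r k₁ - r k₂| < 2 / 2 ^ R := by
        calc |r k₁ - r k₂| = |(r k₁ + f k₂) - (r k₂ + f k₂)| := by ring_nf
          _ ≤ |r k₁ + f k₂| + |r k₂ + f k₂| := abs_sub _ _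
          _ < 1 / 2 ^ R + 1 / 2 ^ R := by linarith
          _ = 2 / 2 ^ R := by ring
      have hge : (2:ℝ) / 2 ^ R ≤ |r k₁ - r k₂| := by
        have : r k₁ - r k₂ = 2 * ((k₁:ℝ) - k₂) / 2 ^ R := by
          simp only [hr]; ring
        rw [this, abs_div, abs_of_pos hpos, abs_mul]
        rw [div_le_div_iff₀ hpos hpos]
        have h1 : (1:ℝ) ≤ |(k₁:ℝ) - k₂| := by
          have : (k₁:ℝ) ≠ k₂ := by exact_mod_cast hne
          have h2 : (k₁:ℝ) - k₂ ≠ 0 := sub_ne_zero.mpr this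
          have := Int.one_le_abs (z := (k₁:ℤ) - k₂) (sub_ne_zero.mpr (by exact_mod_cast hne : (k₁:ℤ) ≠ k₂))
          calc (1:ℝ) ≤ |((k₁:ℤ) - k₂ : ℤ)| := by exact_mod_cast this
            _ = |(k₁:ℝ) - k₂| := by push_cast; rfl
        have h2 : |(2:ℝ)| = 2 := by norm_num
        nlinarith [hpos, mul_le_mul_of_nonneg_right h1 hpos.le]
      linarith
  have hlt : Bad.card < (Finset.range (2 ^ R + 1)).card := by
    rw [Finset.card_range]
    omega
  have hex : ∃ k ∈ Finset.range (2 ^ R + 1), k ∉ Bad := by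
    by_contra hc
    push_neg at hc
    exact absurd (Finset.card_le_card hc) (not_le.mpr hlt)
  obtain ⟨k, hkmem, hkbad⟩ := hex
  have hk : k ≤ 2 ^ R := by
    have := Finset.mem_range.mp hkmem; omega
  refine ⟨r k, ⟨?_, ?_⟩, ?_⟩
  · simp only [hr]
    have : (0:ℝ) ≤ 2 * k / 2 ^ R := by positivity
    linarith
  · simp only [hr]
    have hkR : (k:ℝ) ≤ 2 ^ R := by exact_mod_cast hk
    have : 2 * (k:ℝ) / 2 ^ R ≤ 2 := by
      rw [div_le_iff₀ hpos]; linarith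
    linarith
  · intro s hs
    by_contra hcon
    push_neg at hcon
    exact hkbad (Finset.mem_filter.mpr ⟨hkmem, s, hs, hcon⟩)
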